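/- arXiv:1704.02264 — 2 statements merged into one kernel-verified Lean document; each statement's English description precedes it below -/
import Mathlib

section
/- If φ : G(L) → ℝ^N is linear and satisfies the null axiom (φ_i(v) = 0 whenever player i is null for v), then for each i ∈ N there exist constants p^i_x ∈ ℝ for all x ∈ L with x_i < k such that φ_i(v) = Σ_{x ∈ L, x_i < k} p^i_x (v(x + 1_i) − v(x)) for all v ∈ G(L). -/
open Finset
open scoped Classical

/-- The vector space of `k`-ary games: functions `v : L → ℝ` with `v 0 = 0`. -/
noncomputable def Games (n k : ℕ) : Submodule ℝ ((Fin n → Fin (k+1)) → ℝ) :=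
  LinearMap.ker (LinearMap.proj (0 : Fin n → Fin (k+1)))

/-- `incr i x` is `x + 1_i` (increase coordinate `i` by one, capped at `k`). -/
def incr {n k : ℕ} (i : Fin n) (x : Fin n → Fin (k+1)) : Fin n → Fin (k+1) :=
  fun j => if j = i then ⟨min ((x i : ℕ) + 1) k, by omega⟩ else x j

/-- Player `i` is null for `v`. -/
def IsNull {n k : ℕ} (i : Fin n) (v : (Fin n → Fin (k+1)) → ℝ) : Prop :=
  ∀ x : Fin n → Fin (k+1), (x i : ℕ) < k → v (incr i x) = v x

/-- The "re-integration" map: given `d`, produce the game whose `i`-differences are `d`. -/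
noncomputable def Wmap (n k : ℕ) (i : Fin n) :
    ((Fin n → Fin (k+1)) → ℝ) →ₗ[ℝ] Games n k where
  toFun d := ⟨fun y => ∑ t : Fin (k+1),
      if (t : ℕ) < (y i : ℕ) then d (Function.update y i t) else 0, by
    simp [Games, LinearMap.mem_ker]⟩
  map_add' d₁ d₂ := by
    apply Subtype.ext
    funext y
    simp only [Pi.add_apply, Submodule.coe_add]
    rw [← Finset.sum_add_distrib]
    apply Finset.sum_congr rfl
    intro t _
    split_ifs <;> simp
  map_smul' c d := by
    apply Subtype.ext
    funext y
    simp only [Pi.smul_apply, smul_eq_mul, RingHom.id_apply, SetLike.val_smul]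
    rw [Finset.mul_sum]
    apply Finset.sum_congr rfl
    intro t _
    split_ifs <;> simp

lemma Wdiff {n k : ℕ} (i : Fin n) (d : (Fin n → Fin (k+1)) → ℝ)
    (x : Fin n → Fin (k+1)) (hx : (x i : ℕ) < k) :
    ((Wmap n k i d : Games n k) : (Fin n → Fin (k+1)) → ℝ) (incr i x)
      - ((Wmap n k i d : Games n k) : (Fin n → Fin (k+1)) → ℝ) x = d x := by
  have h1 : ∀ t : Fin (k+1), Function.update (incr i x) i t = Function.update x i t := by
    intro t
    funext j
    by_cases hj : j = i
    · subst hj; simp [Function.update]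
    · simp [Function.update, hj, incr]
  have hinc : (((incr i x) i : ℕ)) = (x i : ℕ) + 1 := by
    simp [incr]; omega
  show (∑ t : Fin (k+1), if (t : ℕ) < ((incr i x) i : ℕ) then d (Function.update (incr i x) i t) else 0)
      - (∑ t : Fin (k+1), if (t : ℕ) < (x i : ℕ) then d (Function.update x i t) else 0) = d x
  rw [← Finset.sum_sub_distrib]
  have h2 : ∀ t ∈ (univ : Finset (Fin (k+1))),
      ((if (t : ℕ) < ((incr i x) i : ℕ) then d (Function.update (incr i x) i t) else 0)
        - (if (t : ℕ) < (x i : ℕ) then d (Function.update x i t) else 0))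
      = if t = x i then d x else 0 := by
    intro t _
    rw [h1 t, hinc]
    rcases lt_trichotomy (t : ℕ) (x i : ℕ) with h | h | h
    · rw [if_pos (by omega), if_pos h, if_neg (by intro he; rw [he] at h; omega), sub_self]
    · have ht : t = x i := Fin.ext h
      rw [if_pos (by omega), if_neg (by omega), if_pos ht, ht, Function.update_eq_self, sub_zero]
    · rw [if_neg (by omega), if_neg (by omega), if_neg (by intro he; rw [he] at h; omega), sub_zero]
  rw [Finset.sum_congr rfl h2, Finset.sum_ite_eq' univ (x i) (fun _ => d x)]
  simp

theorem stmt_4 (n k : ℕ) (φ : Games n k →ₗ[ℝ] (Fin n → ℝ))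
    (hnull : ∀ (i : Fin n) (v : Games n k),
      IsNull i (v : (Fin n → Fin (k+1)) → ℝ) → φ v i = 0) :
    ∀ i : Fin n, ∃ p : (Fin n → Fin (k+1)) → ℝ,
      ∀ v : Games n k,
        φ v i = ∑ x ∈ univ.filter (fun x : Fin n → Fin (k+1) => (x i : ℕ) < k),
          p x * ((v : (Fin n → Fin (k+1)) → ℝ) (incr i x) -
                 (v : (Fin n → Fin (k+1)) → ℝ) x) := by
  intro i
  set W := Wmap n k i with hW
  refine ⟨fun x => φ (W (Pi.single x 1)) i, ?_⟩
  intro v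
  set d : (Fin n → Fin (k+1)) → ℝ :=
    fun x => (v : (Fin n → Fin (k+1)) → ℝ) (incr i x) - (v : (Fin n → Fin (k+1)) → ℝ) x with hd
  have hincr : ∀ x : Fin n → Fin (k+1), ¬ ((x i : ℕ) < k) → incr i x = x := by
    intro x h
    funext j
    by_cases hj : j = i
    · rw [hj]
      simp only [incr, if_pos rfl]
      apply Fin.ext
      have := (x i).isLt
      simp; omega
    · simp [incr, hj]
  have hnullv : IsNull i ((v - W d : Games n k) : (Fin n → Fin (k+1)) → ℝ) := by
    intro x hx
    have hw := Wdiff i d x hx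
    have hdx : d x = (v : (Fin n → Fin (k+1)) → ℝ) (incr i x)
        - (v : (Fin n → Fin (k+1)) → ℝ) x := rfl
    simp only [Submodule.coe_sub, Pi.sub_apply]
    rw [hdx] at hw
    linarith
  have h0 : φ v i = φ (W d) i := by
    have h := hnull i (v - W d) hnullv
    rw [map_sub] at h
    simp only [Pi.sub_apply] at h
    linarith
  have hdsum : d = ∑ x : Fin n → Fin (k+1), d x • (Pi.single x 1 : (Fin n → Fin (k+1)) → ℝ) := by
    funext y
    rw [Finset.sum_apply]
    simp [Pi.single_apply]
  have hWd : φ (W d) i = ∑ x : Fin n → Fin (k+1), d x * φ (W (Pi.single x 1)) i := by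
    conv_lhs => rw [hdsum]
    rw [map_sum, map_sum, Finset.sum_apply]
    apply Finset.sum_congr rfl
    intro x _
    rw [map_smul, map_smul]
    simp
  calc φ v i = φ (W d) i := h0
    _ = ∑ x : Fin n → Fin (k+1), d x * φ (W (Pi.single x 1)) i := hWd
    _ = ∑ x : Fin n → Fin (k+1), φ (W (Pi.single x 1)) i * d x := by
        apply Finset.sum_congr rfl; intro x _; ring
    _ = ∑ x ∈ univ.filter (fun x : Fin n → Fin (k+1) => (x i : ℕ) < k),
          φ (W (Pi.single x 1)) i * d x := by
        symm
        apply Finset.sum_filter_of_ne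
        intro x _ hne
        by_contra h
        apply hne
        have hx := hincr x h
        simp [hd, hx]
end

section
/- If φ : G(L) → ℝ^N satisfies linearity, the null axiom, and symmetry (φ_{σ(i)}(σ∘v) = φ_i(v) for every permutation σ of N), then φ_i(v) = Σ_{x ∈ L, x_i < k} p_{x_i; n_0,…,n_k} (v(x + 1_i) − v(x)), where the coefficient depends only on x_i and on the numbers n_j of components of x_{-i} equal to j, for j = 0,…,k. -/
open Finset
open scoped Classical

/-- The game `σ ∘ v`, defined by `(σ ∘ v)(σ(x)) = v(x)` where `σ(x)_{σ(i)} = x_i`. -/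
def permGame {n k : ℕ} (σ : Equiv.Perm (Fin n)) (v : Games n k) : Games n k :=
  ⟨fun y => (v : (Fin n → Fin (k+1)) → ℝ) (fun i => y (σ i)), v.2⟩

/-- `countLevel i x j` is the number of components of `x_{-i}` equal to level `j`. -/
def countLevel {n k : ℕ} (i : Fin n) (x : Fin n → Fin (k+1)) (j : Fin (k+1)) : ℕ :=
  (univ.filter (fun l : Fin n => l ≠ i ∧ x l = j)).card

/-! Subtracting from `v` the combination `∑ₓ (v (x + 1ᵢ) - v x) • uᵢₓ` of the ray games
`uᵢₓ = 𝟙 {y | y₋ᵢ = x₋ᵢ, xᵢ < yᵢ}` leaves, by telescoping along each line in direction `i`, the game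
`y ↦ v (y with yᵢ := 0)`, for which `i` is null. Hence `φᵢ v = ∑ₓ φᵢ uᵢₓ * (v (x + 1ᵢ) - v x)`.
If `xᵢ = z_j` and `x₋ᵢ`, `z₋ⱼ` have the same level counts, some permutation carries `uᵢₓ` to `uⱼ_z`
and `i` to `j`, so by symmetry `φᵢ uᵢₓ` depends only on `xᵢ` and these counts. -/

open Function

lemma exists_perm_comp_eq_of_card_fiber_eq {α β : Type*} [Finite α] (f g : α → β)
    (h : ∀ b, Nat.card {a // f a = b} = Nat.card {a // g a = b}) :
    ∃ σ : Equiv.Perm α, g ∘ σ = f := by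
  have e : ∀ b, {a // f a = b} ≃ {a // g a = b} := fun b =>
    (Finite.card_eq.1 (h b)).some
  refine ⟨(Equiv.sigmaFiberEquiv f).symm.trans
    ((Equiv.sigmaCongrRight e).trans (Equiv.sigmaFiberEquiv g)), funext fun a => ?_⟩
  exact (e (f a) ⟨a, rfl⟩).2

section
variable {n k : ℕ}

lemma mem_games_iff {v : (Fin n → Fin (k+1)) → ℝ} : v ∈ Games n k ↔ v 0 = 0 := by
  simp [Games]

lemma incr_eq_update (i : Fin n) (x : Fin n → Fin (k+1)) :
    incr i x = update x i ⟨min ((x i : ℕ) + 1) k, by omega⟩ := by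
  funext j
  by_cases hj : j = i
  · subst hj; simp [incr]
  · simp [incr, hj]

noncomputable def rayGame (i : Fin n) (x : Fin n → Fin (k+1)) : Games n k :=
  ⟨fun y => if (∀ l ≠ i, y l = x l) ∧ x i < y i then 1 else 0, by simp [mem_games_iff]⟩

noncomputable def resetGame (i : Fin n) (v : Games n k) : Games n k :=
  ⟨fun y => (v : (Fin n → Fin (k+1)) → ℝ) (update y i 0), by
    simpa [mem_games_iff] using mem_games_iff.1 v.2⟩

lemma isNull_resetGame (i : Fin n) (v : Games n k) :
    IsNull i (resetGame i v : (Fin n → Fin (k+1)) → ℝ) := by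
  intro x _
  simp [resetGame, incr_eq_update]

lemma sum_incr_sub_mul_rayGame_apply (i : Fin n) (v : (Fin n → Fin (k+1)) → ℝ)
    (y : Fin n → Fin (k+1)) :
    ∑ x ∈ univ.filter (fun x : Fin n → Fin (k+1) => (x i : ℕ) < k),
      (v (incr i x) - v x) * (rayGame i x : (Fin n → Fin (k+1)) → ℝ) y
      = v y - v (update y i 0) := by
  set line : ℕ → Fin n → Fin (k+1) := fun t => update y i ⟨min t k, by omega⟩
  have incr_line : ∀ t, incr i (line t) = line (t + 1) := by
    intro t
    simp only [line, incr_eq_update, update_self, update_idem]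
    congr 2
    omega
  have hy : (y i : ℕ) ≤ k := Nat.lt_succ_iff.1 (y i).isLt
  calc _ = ∑ x ∈ univ.filter (fun x : Fin n → Fin (k+1) =>
          (x i : ℕ) < k ∧ (∀ l ≠ i, y l = x l) ∧ x i < y i), (v (incr i x) - v x) := by
        simp only [rayGame, mul_ite, mul_one, mul_zero]
        rw [← sum_filter, filter_filter]
    _ = ∑ t ∈ range (y i), (v (line (t + 1)) - v (line t)) := by
        symm
        refine sum_nbij' line (fun x => x i) ?_ ?_ ?_ ?_ ?_
        · intro t ht
          rw [mem_range] at ht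
          simp only [mem_filter, mem_univ, true_and, line, update_self, Fin.lt_def]
          exact ⟨by omega, fun l hl => (update_of_ne hl _ _).symm, by omega⟩
        · intro x hx
          simp only [mem_filter, mem_univ, true_and] at hx
          simpa [mem_range] using hx.2.2
        · intro t ht
          rw [mem_range] at ht
          simp [line]
          omega
        · intro x hx
          simp only [mem_filter, mem_univ, true_and] at hx
          simp only [line]
          rw [eq_comm, eq_update_iff]
          exact ⟨Fin.ext (by simp; omega), fun l hl => (hx.2.1 l hl).symm⟩
        · intro t _
          rw [incr_line]
    _ = v y - v (update y i 0) := by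
        rw [sum_range_sub (fun t => v (line t))]
        simp [line, min_eq_left hy]

lemma resetGame_add_sum_rayGame (i : Fin n) (v : Games n k) :
    resetGame i v + ∑ x ∈ univ.filter (fun x : Fin n → Fin (k+1) => (x i : ℕ) < k),
      ((v : (Fin n → Fin (k+1)) → ℝ) (incr i x) - (v : (Fin n → Fin (k+1)) → ℝ) x) •
        rayGame i x = v := by
  ext y
  simp only [Submodule.coe_add, Submodule.coe_sum, Submodule.coe_smul, Pi.add_apply,
    Finset.sum_apply, Pi.smul_apply, smul_eq_mul, sum_incr_sub_mul_rayGame_apply]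
  simp [resetGame]

lemma permGame_rayGame (σ : Equiv.Perm (Fin n)) (i : Fin n) (z : Fin n → Fin (k+1)) :
    permGame σ (rayGame i (z ∘ σ)) = rayGame (σ i) z := by
  ext y
  simp only [permGame, rayGame, comp_apply]
  congr 2
  refine propext <| Iff.trans ?_ σ.forall_congr_right
  simp [σ.injective.eq_iff]

lemma exists_perm_of_countLevel_eq {i j : Fin n} {x z : Fin n → Fin (k+1)} (hlevel : x i = z j)
    (hcount : countLevel i x = countLevel j z) :
    ∃ σ : Equiv.Perm (Fin n), σ i = j ∧ z ∘ σ = x := by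
  -- tagging `i` by `none` forces a fibre-matching permutation to send `i` to `j`
  let tag : Fin n → (Fin n → Fin (k+1)) → Fin n → Option (Fin (k+1)) :=
    fun i x l => if l = i then none else some (x l)
  have card_tag : ∀ i x b, Nat.card {l // tag i x l = b} = b.elim 1 (countLevel i x) := by
    intro i x b
    cases b <;> simp [tag, Nat.card_eq_fintype_card, Fintype.card_subtype, countLevel]
  obtain ⟨σ, hσ⟩ := exists_perm_comp_eq_of_card_fiber_eq (tag i x) (tag j z) fun b => by
    rw [card_tag, card_tag, hcount]
  have tag_comp : ∀ l, tag j z (σ l) = tag i x l := congrFun hσ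
  have hσi : σ i = j := by simpa [tag] using tag_comp i
  refine ⟨σ, hσi, funext fun l => ?_⟩
  by_cases hl : l = i
  · simp [hl, hσi, hlevel]
  · exact (by simpa [tag, hl] using tag_comp l : ¬σ l = j ∧ z (σ l) = x l).2

lemma apply_rayGame_eq_of_countLevel_eq (φ : Games n k →ₗ[ℝ] (Fin n → ℝ))
    (hsym : ∀ (σ : Equiv.Perm (Fin n)) (v : Games n k) (i : Fin n),
      φ (permGame σ v) (σ i) = φ v i)
    {i j : Fin n} {x z : Fin n → Fin (k+1)} (hlevel : x i = z j)
    (hcount : countLevel i x = countLevel j z) :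
    φ (rayGame i x) i = φ (rayGame j z) j := by
  obtain ⟨σ, rfl, rfl⟩ := exists_perm_of_countLevel_eq hlevel hcount
  rw [← hsym σ, permGame_rayGame]

end

theorem stmt_6 (n k : ℕ) (φ : Games n k →ₗ[ℝ] (Fin n → ℝ))
    (hnull : ∀ (i : Fin n) (v : Games n k),
      IsNull i (v : (Fin n → Fin (k+1)) → ℝ) → φ v i = 0)
    (hsym : ∀ (σ : Equiv.Perm (Fin n)) (v : Games n k) (i : Fin n),
      φ (permGame σ v) (σ i) = φ v i) :
    ∃ p : Fin (k+1) → (Fin (k+1) → ℕ) → ℝ,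
      ∀ (i : Fin n) (v : Games n k),
        φ v i = ∑ x ∈ univ.filter (fun x : Fin n → Fin (k+1) => (x i : ℕ) < k),
          p (x i) (countLevel i x) *
            ((v : (Fin n → Fin (k+1)) → ℝ) (incr i x) -
             (v : (Fin n → Fin (k+1)) → ℝ) x) := by
  let key : Fin n × (Fin n → Fin (k+1)) → Fin (k+1) × (Fin (k+1) → ℕ) :=
    fun w => (w.2 w.1, countLevel w.1 w.2)
  let ray : Fin n × (Fin n → Fin (k+1)) → ℝ := fun w => φ (rayGame w.1 w.2) w.1
  have ray_factors : ray.FactorsThrough key := fun _ _ h =>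
    apply_rayGame_eq_of_countLevel_eq φ hsym (Prod.ext_iff.1 h).1 (Prod.ext_iff.1 h).2
  refine ⟨fun t m => extend key ray 0 (t, m), fun i v => ?_⟩
  conv_lhs => rw [← resetGame_add_sum_rayGame i v]
  rw [map_add, map_sum, Pi.add_apply, hnull i _ (isNull_resetGame i v), zero_add,
    Finset.sum_apply]
  refine sum_congr rfl fun x _ => ?_
  rw [map_smul, Pi.smul_apply, smul_eq_mul, mul_comm]
  exact congrArg (· * _) (ray_factors.extend_apply 0 (i, x)).symm
end
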